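/- arXiv:1905.04163 — 3 statements merged into one kernel-verified Lean document; each statement's English description precedes it below -/
import Mathlib

section
/- Let A = k + T·k[S,T] as a subring of B = k[S,T], where k is a field, and let P = k·T + T²·k[S,T]. Then P is an ideal of A containing T, but TB is not contained in P. -/
open MvPolynomial

/-- Let `A = k + T·k[S,T]` as a subring of `B = k[S,T]` (variables `S = X 0`, `T = X 1`),
and let `P = k·T + T²·k[S,T]`.  Then `P` is an ideal of `A` containing `T`,
but `T·B` is not contained in `P`. -/
theorem nonradical_counterexample (k : Type*) [Field k] :
    letI B := MvPolynomial (Fin 2) k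
    letI T : B := X 1
    letI A : Set B := {f | ∃ (c : k) (g : B), f = C c + T * g}
    letI P : Set B := {f | ∃ (c : k) (g : B), f = C c * T + T ^ 2 * g}
    -- `P ⊆ A` and `T ∈ P`
    (P ⊆ A) ∧ T ∈ P ∧
    -- `P` is an ideal of `A`:
    (0 : B) ∈ P ∧ (∀ f g, f ∈ P → g ∈ P → f + g ∈ P) ∧
    (∀ f, f ∈ P → -f ∈ P) ∧ (∀ a f, a ∈ A → f ∈ P → a * f ∈ P) ∧
    -- but `T·B ⊈ P`:
    ¬ (∀ b : B, T * b ∈ P) := by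
  refine ⟨?_, ⟨1, 0, by simp⟩, ⟨0, 0, by simp⟩, ?_, ?_, ?_, ?_⟩
  · rintro f ⟨c, g, rfl⟩
    exact ⟨0, C c + X 1 * g, by rw [map_zero]; ring⟩
  · rintro f g ⟨c, a, rfl⟩ ⟨d, b, rfl⟩
    exact ⟨c + d, a + b, by rw [map_add]; ring⟩
  · rintro f ⟨c, a, rfl⟩
    exact ⟨-c, -a, by rw [map_neg]; ring⟩
  · rintro a f ⟨c, g, rfl⟩ ⟨d, h, rfl⟩
    exact ⟨c * d, C c * h + C d * g + X 1 * (g * h), by rw [map_mul]; ring⟩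
  · intro H
    obtain ⟨c, g, hg⟩ := H (X 0)
    have := congrArg (coeff (Finsupp.single 1 1 + Finsupp.single 0 1)) hg
    rw [coeff_X_mul, coeff_X', if_pos rfl, coeff_add, coeff_C_mul, coeff_X', if_neg,
      X_pow_eq_monomial, coeff_monomial_mul', if_neg] at this
    · simp at this
    · intro h
      have := Finsupp.le_def.mp h 1
      simp [Finsupp.single_apply] at this
    · intro h
      have := congrArg (fun m => m 0) h
      simp [Finsupp.single_apply] at this
end

section
/- Let A ⊆ B be commutative rings with T ∈ B a non-zero-divisor such that TB ⊆ A. If m is a maximal ideal of A with T ∉ m, then there exists a maximal ideal M of B with m = M ∩ A; in particular mB ≠ B. -/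
/-- Let `A ⊆ B` be commutative rings with `T ∈ B` a non-zero-divisor such that `T·B ⊆ A`.
If `m` is a maximal ideal of `A` with `T ∉ m`, then there is a maximal ideal `M` of `B`
with `m = M ∩ A`; in particular `m·B ≠ B`. -/
theorem maximal_contraction {B : Type*} [CommRing B] (A : Subring B) (T : B)
    (hreg : T ∈ nonZeroDivisors B) (hTB : ∀ b : B, T * b ∈ A)
    (m : Ideal A) (hm : m.IsMaximal) (hTm : (⟨T, by simpa using hTB 1⟩ : A) ∉ m) :
    (∃ M : Ideal B, M.IsMaximal ∧ m = M.comap A.subtype) ∧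
      m.map A.subtype ≠ ⊤ := by
  have hne : m.map A.subtype ≠ ⊤ := by
    intro htop
    have h1 : (1 : B) ∈ m.map A.subtype := htop ▸ Submodule.mem_top
    rw [Ideal.map, Ideal.span, Submodule.mem_span_set'] at h1
    obtain ⟨n, f, g, hfg⟩ := h1
    -- choose preimages in m for each g i
    have hgi : ∀ i, ∃ x : A, x ∈ m ∧ (x : B) = (g i : B) := by
      intro i
      obtain ⟨x, hx, hxe⟩ := (g i).2
      exact ⟨x, hx, hxe⟩
    choose x hxm hxe using hgi
    have hsum : (⟨T, by simpa using hTB 1⟩ : A) =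
        ∑ i, (⟨T * f i, hTB (f i)⟩ : A) * x i := by
      apply Subtype.ext
      push_cast
      simp only [hxe]
      calc (T : B) = T * ∑ i, f i • (g i : B) := by rw [hfg, mul_one]
        _ = ∑ i, T * f i * (g i : B) := by rw [Finset.mul_sum]; simp only [smul_eq_mul, mul_assoc]
    exact hTm (hsum ▸ Ideal.sum_mem m fun i _ => Ideal.mul_mem_left m _ (hxm i))
  refine ⟨?_, hne⟩
  obtain ⟨M, hM, hle⟩ := Ideal.exists_le_maximal _ hne
  refine ⟨M, hM, ?_⟩
  have hle' : m ≤ M.comap A.subtype := Ideal.map_le_iff_le_comap.mp hle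
  have hne' : M.comap A.subtype ≠ ⊤ := fun h =>
    hM.ne_top (Ideal.eq_top_iff_one M |>.mpr (by
      have := Ideal.eq_top_iff_one _ |>.mp h
      simpa using this))
  exact (hm.eq_of_le hne' hle').symm ▸ rfl
end

section
/- Let A ⊆ B be commutative rings with T ∈ B a non-zero-divisor, TB ⊆ A. If both B_T and A/TB satisfy the ascending chain condition on radical ideals, then A satisfies the ascending chain condition on radical ideals. -/
/-- A commutative ring satisfies the ascending chain condition on radical ideals. -/
def ACCR (R : Type*) [CommRing R] : Prop :=
  ∀ f : ℕ →o Ideal R, (∀ n, (f n).IsRadical) → ∃ n, ∀ m, n ≤ m → f m = f n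

/-- Let `A ⊆ B` be commutative rings with `T ∈ B` a non-zero-divisor, `T·B ⊆ A`.
If both `B_T` and `A/TB` satisfy the ascending chain condition on radical ideals,
then so does `A`. -/
theorem accr_of_accr_localization_and_quotient {B : Type*} [CommRing B] (A : Subring B)
    (T : B) (hreg : T ∈ nonZeroDivisors B) (hTB : ∀ b : B, T * b ∈ A)
    (J : Ideal A) (hJ : J = Ideal.span {a : A | ∃ b : B, (a : B) = T * b})
    (h1 : ACCR (Localization.Away T)) (h2 : ACCR (A ⧸ J)) :
    ACCR A := by
  classical
  set S := Localization.Away T with hS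
  let φ : A →+* S := (algebraMap B S).comp A.subtype
  let π : A →+* A ⧸ J := Ideal.Quotient.mk J
  intro f hf
  -- the chain of radicals of extensions to S stabilizes
  obtain ⟨n1, hn1⟩ := h1
    ⟨fun n => (Ideal.map φ (f n)).radical,
      fun a b hab => Ideal.radical_mono (Ideal.map_mono (f.mono hab))⟩
    (fun n => Ideal.radical_isRadical _)
  obtain ⟨n2, hn2⟩ := h2
    ⟨fun n => (Ideal.map π (f n)).radical,
      fun a b hab => Ideal.radical_mono (Ideal.map_mono (f.mono hab))⟩
    (fun n => Ideal.radical_isRadical _)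
  set N := max n1 n2 with hN
  -- auxiliary fact: T times an element of the extension of I to B comes from I
  have key : ∀ (I : Ideal A) (y : B), y ∈ Ideal.map A.subtype I →
      ∃ a ∈ I, (a : B) = T * y := by
    intro I y hy
    have H : ∀ y, y ∈ Ideal.map A.subtype I → ∀ b : B,
        ∃ a ∈ I, (a : B) = T * (b * y) := by
      intro y hy
      refine Submodule.span_induction ?_ ?_ ?_ ?_ hy
      · rintro y ⟨a0, ha0, rfl⟩ b
        refine ⟨⟨T * b, hTB b⟩ * a0, I.mul_mem_left _ ha0, ?_⟩
        push_cast
        show (T * b) * (A.subtype a0) = T * (b * A.subtype a0)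
        ring
      · intro b
        exact ⟨0, I.zero_mem, by simp⟩
      · rintro y z hy hz ihy ihz b
        obtain ⟨a1, ha1, e1⟩ := ihy b
        obtain ⟨a2, ha2, e2⟩ := ihz b
        refine ⟨a1 + a2, I.add_mem ha1 ha2, ?_⟩
        push_cast [e1, e2]
        ring
      · rintro c y hy ihy b
        obtain ⟨a1, ha1, e1⟩ := ihy (b * c)
        refine ⟨a1, ha1, ?_⟩
        rw [e1]
        show T * (b * c * y) = T * (b * (c • y))
        rw [smul_eq_mul]
        ring
    obtain ⟨a, ha, e⟩ := H y hy 1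
    exact ⟨a, ha, by simpa using e⟩
  -- every element of J is T times something
  have hJmem : ∀ j ∈ J, ∃ b : B, (j : A) = T * b := by
    intro j hj
    rw [hJ] at hj
    refine Submodule.span_induction ?_ ?_ ?_ ?_ hj
    · exact fun a ha => ha
    · exact ⟨0, by simp⟩
    · rintro a b _ _ ⟨b1, e1⟩ ⟨b2, e2⟩
      exact ⟨b1 + b2, by push_cast [e1, e2]; ring⟩
    · rintro c a _ ⟨b1, e1⟩
      refine ⟨(c : B) * b1, ?_⟩
      rw [smul_eq_mul]
      push_cast [e1]
      ring
  have hinj : Function.Injective (algebraMap B S) :=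
    IsLocalization.injective S (Submonoid.powers_le.mpr hreg)
  refine ⟨N, fun m hm => ?_⟩
  refine le_antisymm ?_ (f.mono hm)
  intro x hxm
  -- localization side
  have hg1 : (Ideal.map φ (f m)).radical = (Ideal.map φ (f N)).radical := by
    have e1 := hn1 m (le_trans (le_max_left n1 n2) hm)
    have e2 := hn1 N (le_max_left n1 n2)
    exact e1.trans e2.symm
  have hx1 : φ x ∈ (Ideal.map φ (f N)).radical := by
    rw [← hg1]
    exact Ideal.le_radical (Ideal.mem_map_of_mem φ hxm)
  obtain ⟨c, hc⟩ := Ideal.mem_radical_iff.mp hx1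
  have hc' : (algebraMap B S) ((x : B) ^ c) ∈
      Ideal.map (algebraMap B S) (Ideal.map A.subtype (f N)) := by
    rw [Ideal.map_map]
    simpa [φ, map_pow] using hc
  obtain ⟨⟨⟨i, hi⟩, s⟩, hs⟩ :=
    (IsLocalization.mem_map_algebraMap_iff (Submonoid.powers T) S).mp hc'
  obtain ⟨e, he⟩ := s.2
  have heq : (x : B) ^ c * T ^ e ∈ Ideal.map A.subtype (f N) := by
    have : (algebraMap B S) ((x : B) ^ c * (s : B)) = (algebraMap B S) i := by
      rw [map_mul]; exact hs
    have h2 : (x : B) ^ c * (s : B) = i := hinj this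
    rw [show T ^ e = (s : B) from he, h2]
    exact hi
  obtain ⟨a, haN, ha⟩ := key (f N) _ heq
  -- quotient side
  have hg2 : (Ideal.map π (f m)).radical = (Ideal.map π (f N)).radical := by
    have e1 := hn2 m (le_trans (le_max_right n1 n2) hm)
    have e2 := hn2 N (le_max_right n1 n2)
    exact e1.trans e2.symm
  have hx2 : π x ∈ (Ideal.map π (f N)).radical := by
    rw [← hg2]
    exact Ideal.le_radical (Ideal.mem_map_of_mem π hxm)
  obtain ⟨d, hd⟩ := Ideal.mem_radical_iff.mp hx2
  have hxd : x ^ d ∈ f N ⊔ J := by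
    have hmem : x ^ d ∈ Ideal.comap π (Ideal.map π (f N)) := by
      simp only [Ideal.mem_comap, map_pow]
      exact hd
    rwa [Ideal.comap_map_of_surjective π Ideal.Quotient.mk_surjective,
      ← RingHom.ker_eq_comap_bot, Ideal.mk_ker] at hmem
  obtain ⟨i2, hi2, j, hjJ, hij⟩ := Submodule.mem_sup.mp hxd
  obtain ⟨b0, hb0⟩ := hJmem j hjJ
  -- finish
  have hsub : x ^ d - j ∈ f N := by
    have : x ^ d - j = i2 := by rw [← hij]; ring
    rw [this]; exact hi2
  have hsub2 : (x ^ d) ^ (e + 2) - j ^ (e + 2) ∈ f N := by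
    obtain ⟨t, ht⟩ := sub_dvd_pow_sub_pow (x ^ d) j (e + 2)
    rw [ht]
    exact Ideal.mul_mem_right _ _ hsub
  have hjx : j ^ (e + 2) * x ^ c ∈ f N := by
    have hcoe : ((j ^ (e + 2) * x ^ c : A) : B)
        = ((a * ⟨T * b0 ^ (e + 2), hTB _⟩ : A) : B) := by
      push_cast [hb0, ha]
      ring
    have : j ^ (e + 2) * x ^ c = a * ⟨T * b0 ^ (e + 2), hTB _⟩ :=
      Subtype.ext hcoe
    rw [this]
    exact Ideal.mul_mem_right _ _ haN
  have hfinal : x ^ (d * (e + 2) + c) ∈ f N := by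
    have hx' : x ^ (d * (e + 2) + c)
        = ((x ^ d) ^ (e + 2) - j ^ (e + 2)) * x ^ c + j ^ (e + 2) * x ^ c := by
      rw [← pow_mul]; ring
    rw [hx']
    exact Ideal.add_mem _ (Ideal.mul_mem_right _ _ hsub2) hjx
  exact hf N ⟨d * (e + 2) + c, hfinal⟩
end
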